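/- (Global convergence of CDA-Picard, Theorem 3.1) Let u ∈ V be a weak NSE solution, assume 2 C_I H α² < 1 and μ ≥ ν/(4 C_I² H²), and let (u_k)_{k≥0} be any sequence in V such that for every k, u_{k+1} is a CDA-Picard step from u_k. Then for every k, ‖u − u_k‖_* ≤ (√(2 C_I H) α)^k ‖u − u_0‖_*; in particular ‖u − u_k‖_* → 0 as k → ∞, where α = M ν⁻² F and ‖v‖_* = (‖G v‖² + ‖v‖²/(2 C_I² H²))^(1/2). -/

import Mathlib

/-!
Write `e_k = u - u_k`. Subtracting the NSE from the CDA-Picard equation and testing with `e_{k+1}`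
(the term `b(u_k, e_{k+1}, e_{k+1})` vanishes) gives
`ν ‖∇e_{k+1}‖² + μ ‖I_H e_{k+1}‖² = -b(e_k, u, e_{k+1})`. The first bound on `b`, the a priori
bound `‖∇u‖ ≤ F / ν` and Young's inequality turn this into
`ν/2 ‖∇e_{k+1}‖² + μ ‖I_H e_{k+1}‖² ≤ α² ν / 2 · ‖e_k‖ ‖∇e_k‖`. By the interpolation estimate and
`μ ≥ ν / (4 C_I² H²)` the left side is at least `ν/4 ‖e_{k+1}‖_*²`, while
`‖e_k‖ ‖∇e_k‖ ≤ C_I H ‖e_k‖_*²` by AM-GM; hence `‖e_{k+1}‖_*² ≤ 2 C_I H α² ‖e_k‖_*²`.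
-/

open Real

lemma mul_le_half_mul_sq_add_sq_div {ν : ℝ} (hν : 0 < ν) (a x : ℝ) :
    a * x ≤ ν / 2 * x ^ 2 + a ^ 2 / (2 * ν) := by
  have := two_mul_le_add_mul_sq (a := x) (b := a) hν
  have : ν⁻¹ * a ^ 2 = 2 * (a ^ 2 / (2 * ν)) := by field_simp
  nlinarith

lemma sqrt_le_pow_mul_sqrt {s : ℕ → ℝ} {r : ℝ} (hr : 0 ≤ r) (hs : ∀ k, s (k + 1) ≤ r ^ 2 * s k)
    (k : ℕ) : √(s k) ≤ r ^ k * √(s 0) := by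
  refine le_geom (u := fun k => √(s k)) hr k fun n _ => ?_
  calc √(s (n + 1)) ≤ √(r ^ 2 * s n) := Real.sqrt_le_sqrt (hs n)
    _ = r * √(s n) := by rw [Real.sqrt_mul (sq_nonneg r), Real.sqrt_sq hr]

section

variable {V W : Type*} [NormedAddCommGroup V] [Module ℝ V] [NormedAddCommGroup W] [Module ℝ W]

/-- `‖v‖_* ^ 2`. -/
noncomputable def starNormSq (G : V →ₗ[ℝ] W) (CI H : ℝ) (v : V) : ℝ :=
  ‖G v‖ ^ 2 + ‖v‖ ^ 2 / (2 * CI ^ 2 * H ^ 2)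

lemma norm_mul_norm_le_starNormSq (G : V →ₗ[ℝ] W) {CI H : ℝ} (hCI : 0 < CI) (hH : 0 < H)
    (v : V) : ‖v‖ * ‖G v‖ ≤ CI * H * starNormSq G CI H v := by
  have key : CI * H * starNormSq G CI H v - ‖v‖ * ‖G v‖ =
      ((CI * H * ‖G v‖ - ‖v‖) ^ 2 + (CI * H * ‖G v‖) ^ 2) / (2 * (CI * H)) := by
    unfold starNormSq
    field_simp
    ring
  have : 0 ≤ ((CI * H * ‖G v‖ - ‖v‖) ^ 2 + (CI * H * ‖G v‖) ^ 2) / (2 * (CI * H)) := by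
    positivity
  linarith

lemma norm_sq_le_of_norm_sub_le (G : V →ₗ[ℝ] W) (IH : V →ₗ[ℝ] V) {c : ℝ}
    (hIH : ∀ v : V, ‖v - IH v‖ ≤ c * ‖G v‖) (v : V) :
    ‖v‖ ^ 2 ≤ 2 * ((c * ‖G v‖) ^ 2 + ‖IH v‖ ^ 2) := by
  have htri : ‖v‖ ≤ c * ‖G v‖ + ‖IH v‖ :=
    calc ‖v‖ = ‖(v - IH v) + IH v‖ := by rw [sub_add_cancel]
      _ ≤ ‖v - IH v‖ + ‖IH v‖ := norm_add_le _ _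
      _ ≤ c * ‖G v‖ + ‖IH v‖ := by gcongr; exact hIH v
  calc ‖v‖ ^ 2 ≤ (c * ‖G v‖ + ‖IH v‖) ^ 2 := by gcongr
    _ ≤ 2 * ((c * ‖G v‖) ^ 2 + ‖IH v‖ ^ 2) := add_sq_le

lemma starNormSq_le_of_nudging (G : V →ₗ[ℝ] W) (IH : V →ₗ[ℝ] V) {CI H ν μ : ℝ}
    (hCI : 0 < CI) (hH : 0 < H) (hν : 0 < ν)
    (hIH : ∀ v : V, ‖v - IH v‖ ≤ CI * H * ‖G v‖) (hμ : μ ≥ ν / (4 * CI ^ 2 * H ^ 2)) (v : V) :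
    ν / 4 * starNormSq G CI H v ≤ ν / 2 * ‖G v‖ ^ 2 + μ * ‖IH v‖ ^ 2 := by
  have hinterp := norm_sq_le_of_norm_sub_le G IH hIH v
  have hsplit : ν / 4 * starNormSq G CI H v =
      ν / 4 * ‖G v‖ ^ 2 + ν / (4 * CI ^ 2 * H ^ 2) * (‖v‖ ^ 2 / 2) := by
    unfold starNormSq
    field_simp
  calc ν / 4 * starNormSq G CI H v
      ≤ ν / 4 * ‖G v‖ ^ 2 + ν / (4 * CI ^ 2 * H ^ 2) * ((CI * H * ‖G v‖) ^ 2 + ‖IH v‖ ^ 2) := by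
        rw [hsplit]; gcongr; linarith
    _ = ν / 2 * ‖G v‖ ^ 2 + ν / (4 * CI ^ 2 * H ^ 2) * ‖IH v‖ ^ 2 := by
        field_simp
        ring
    _ ≤ ν / 2 * ‖G v‖ ^ 2 + μ * ‖IH v‖ ^ 2 := by gcongr

end

section

variable {V W : Type*} [NormedAddCommGroup V] [InnerProductSpace ℝ V]
  [NormedAddCommGroup W] [InnerProductSpace ℝ W]

def IsWeakNSESolution (G : V →ₗ[ℝ] W) (b : V →ₗ[ℝ] V →ₗ[ℝ] V →ₗ[ℝ] ℝ) (f : V →ₗ[ℝ] ℝ)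
    (ν : ℝ) (u : V) : Prop :=
  ∀ v : V, ν * (inner ℝ (G u) (G v) : ℝ) + b u u v = f v

/-- `w'` is the CDA-Picard step from `w`, nudged towards `u`. -/
def IsCDAPicardStep (G : V →ₗ[ℝ] W) (b : V →ₗ[ℝ] V →ₗ[ℝ] V →ₗ[ℝ] ℝ) (f : V →ₗ[ℝ] ℝ)
    (IH : V →ₗ[ℝ] V) (ν μ : ℝ) (u w w' : V) : Prop :=
  ∀ v : V, ν * (inner ℝ (G w') (G v) : ℝ) + b w w' v + μ * (inner ℝ (IH (w' - u)) (IH v) : ℝ) = f v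

variable {G : V →ₗ[ℝ] W} {b : V →ₗ[ℝ] V →ₗ[ℝ] V →ₗ[ℝ] ℝ} {f : V →ₗ[ℝ] ℝ} {IH : V →ₗ[ℝ] V}
  {M F ν μ CI H : ℝ} {u w w' : V}

lemma IsWeakNSESolution.mul_norm_le (hF : 0 ≤ F) (hbskew : ∀ u v : V, b u v v = 0)
    (hf : ∀ v : V, |f v| ≤ F * ‖G v‖) (hu : IsWeakNSESolution G b f ν u) :
    ν * ‖G u‖ ≤ F := by
  have henergy : ν * ‖G u‖ ^ 2 = f u := by
    simpa only [hbskew, real_inner_self_eq_norm_sq, add_zero] using hu u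
  rcases (norm_nonneg (G u)).eq_or_lt with h0 | h0
  · rw [← h0]; simpa using hF
  · have : ν * ‖G u‖ * ‖G u‖ ≤ F * ‖G u‖ := by
      linarith [le_abs_self (f u), hf u]
    exact le_of_mul_le_mul_right this h0

lemma IsCDAPicardStep.error_eq (hbskew : ∀ u v : V, b u v v = 0)
    (hu : IsWeakNSESolution G b f ν u) (hstep : IsCDAPicardStep G b f IH ν μ u w w') :
    ν * ‖G (u - w')‖ ^ 2 + b (u - w) u (u - w') + μ * ‖IH (u - w')‖ ^ 2 = 0 := by
  have h1 := hu (u - w')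
  have h2 := hstep (u - w')
  have hskew := hbskew w (u - w')
  rw [← real_inner_self_eq_norm_sq, ← real_inner_self_eq_norm_sq]
  simp only [map_sub, LinearMap.sub_apply, inner_sub_left, inner_sub_right] at h1 h2 hskew ⊢
  linarith [real_inner_comm (G u) (G w'), real_inner_comm (IH u) (IH w')]

lemma IsCDAPicardStep.energy_le (hM : 0 ≤ M) (hF : 0 ≤ F) (hν : 0 < ν)
    (hbskew : ∀ u v : V, b u v v = 0)
    (hb1 : ∀ u w v : V, |b u w v| ≤ M * √‖u‖ * √‖G u‖ * ‖G w‖ * ‖G v‖)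
    (hf : ∀ v : V, |f v| ≤ F * ‖G v‖)
    (hu : IsWeakNSESolution G b f ν u) (hstep : IsCDAPicardStep G b f IH ν μ u w w') :
    ν / 2 * ‖G (u - w')‖ ^ 2 + μ * ‖IH (u - w')‖ ^ 2 ≤
      (M * F / ν) ^ 2 * (‖u - w‖ * ‖G (u - w)‖) / (2 * ν) := by
  have herr := hstep.error_eq hbskew hu
  set e := u - w'
  set d := u - w
  have hGu : ‖G u‖ ≤ F / ν := (le_div_iff₀' hν).2 (hu.mul_norm_le hF hbskew hf)
  have htrilinear : -b d u e ≤ M * F / ν * (√‖d‖ * √‖G d‖) * ‖G e‖ :=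
    calc -b d u e ≤ |b d u e| := neg_le_abs _
      _ ≤ M * √‖d‖ * √‖G d‖ * ‖G u‖ * ‖G e‖ := hb1 d u e
      _ ≤ M * √‖d‖ * √‖G d‖ * (F / ν) * ‖G e‖ := by gcongr
      _ = M * F / ν * (√‖d‖ * √‖G d‖) * ‖G e‖ := by ring
  have hyoung := mul_le_half_mul_sq_add_sq_div hν (M * F / ν * (√‖d‖ * √‖G d‖)) ‖G e‖
  rw [mul_pow, mul_pow, sq_sqrt (norm_nonneg _), sq_sqrt (norm_nonneg _)] at hyoung
  linarith

lemma IsCDAPicardStep.starNormSq_le (hM : 0 ≤ M) (hF : 0 ≤ F) (hν : 0 < ν)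
    (hCI : 0 < CI) (hH : 0 < H) (hbskew : ∀ u v : V, b u v v = 0)
    (hb1 : ∀ u w v : V, |b u w v| ≤ M * √‖u‖ * √‖G u‖ * ‖G w‖ * ‖G v‖)
    (hf : ∀ v : V, |f v| ≤ F * ‖G v‖) (hIH : ∀ v : V, ‖v - IH v‖ ≤ CI * H * ‖G v‖)
    (hμ : μ ≥ ν / (4 * CI ^ 2 * H ^ 2))
    (hu : IsWeakNSESolution G b f ν u) (hstep : IsCDAPicardStep G b f IH ν μ u w w') :
    starNormSq G CI H (u - w') ≤ 2 * CI * H * (M * F / ν ^ 2) ^ 2 * starNormSq G CI H (u - w) := by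
  have hscaled : ν / 4 * starNormSq G CI H (u - w') ≤
      ν / 4 * (2 * CI * H * (M * F / ν ^ 2) ^ 2 * starNormSq G CI H (u - w)) :=
    calc ν / 4 * starNormSq G CI H (u - w')
        ≤ ν / 2 * ‖G (u - w')‖ ^ 2 + μ * ‖IH (u - w')‖ ^ 2 :=
          starNormSq_le_of_nudging G IH hCI hH hν hIH hμ _
      _ ≤ (M * F / ν) ^ 2 * (‖u - w‖ * ‖G (u - w)‖) / (2 * ν) :=
          hstep.energy_le hM hF hν hbskew hb1 hf hu
      _ ≤ (M * F / ν) ^ 2 * (CI * H * starNormSq G CI H (u - w)) / (2 * ν) := by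
          gcongr (M * F / ν) ^ 2 * ?_ / (2 * ν)
          exact norm_mul_norm_le_starNormSq G hCI hH _
      _ = ν / 4 * (2 * CI * H * (M * F / ν ^ 2) ^ 2 * starNormSq G CI H (u - w)) := by
          field_simp
          ring
  exact le_of_mul_le_mul_left hscaled (by positivity)

end

theorem cda_picard_global_convergence_general
    {V W : Type*} [NormedAddCommGroup V] [InnerProductSpace ℝ V]
    [NormedAddCommGroup W] [InnerProductSpace ℝ W]
    (G : V →ₗ[ℝ] W) (b : V →ₗ[ℝ] V →ₗ[ℝ] V →ₗ[ℝ] ℝ) (f : V →ₗ[ℝ] ℝ)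
    (M F ν : ℝ) (hM : 0 < M) (hF : 0 ≤ F) (hν : 0 < ν)
    (hbskew : ∀ u v : V, b u v v = 0)
    (hb1 : ∀ u w v : V, |b u w v| ≤ M * Real.sqrt ‖u‖ * Real.sqrt ‖G u‖ * ‖G w‖ * ‖G v‖)
    (hf : ∀ v : V, |f v| ≤ F * ‖G v‖)
    (IH : V →ₗ[ℝ] V) (CI H μ : ℝ) (hCI : 0 < CI) (hH : 0 < H)
    (hIH : ∀ v : V, ‖v - IH v‖ ≤ CI * H * ‖G v‖)
    (u : V) (hu : ∀ v : V, ν * (inner ℝ (G u) (G v) : ℝ) + b u u v = f v)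
    (hsmall : 2 * CI * H * (M * F / ν ^ 2) ^ 2 < 1)
    (hμ' : μ ≥ ν / (4 * CI ^ 2 * H ^ 2))
    (uk : ℕ → V)
    (hstep : ∀ k, ∀ v : V, ν * (inner ℝ (G (uk (k + 1))) (G v) : ℝ) + b (uk k) (uk (k + 1)) v
      + μ * (inner ℝ (IH (uk (k + 1) - u)) (IH v) : ℝ) = f v)
    : (∀ k, Real.sqrt (‖G (u - uk k)‖ ^ 2 + ‖u - uk k‖ ^ 2 / (2 * CI ^ 2 * H ^ 2)) ≤
        (Real.sqrt (2 * CI * H) * (M * F / ν ^ 2)) ^ k * Real.sqrt (‖G (u - uk 0)‖ ^ 2 + ‖u - uk 0‖ ^ 2 / (2 * CI ^ 2 * H ^ 2))) ∧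
      Filter.Tendsto (fun k => Real.sqrt (‖G (u - uk k)‖ ^ 2 + ‖u - uk k‖ ^ 2 / (2 * CI ^ 2 * H ^ 2))) Filter.atTop (nhds 0) := by
  set r := √(2 * CI * H) * (M * F / ν ^ 2)
  have hr0 : 0 ≤ r := by positivity
  have hr2 : r ^ 2 = 2 * CI * H * (M * F / ν ^ 2) ^ 2 := by
    rw [mul_pow, sq_sqrt (by positivity)]
  have hcontract (k : ℕ) :
      starNormSq G CI H (u - uk (k + 1)) ≤ r ^ 2 * starNormSq G CI H (u - uk k) :=
    hr2 ▸ IsCDAPicardStep.starNormSq_le hM.le hF hν hCI hH hbskew hb1 hf hIH hμ' hu (hstep k)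
  have hbound := sqrt_le_pow_mul_sqrt (s := fun k => starNormSq G CI H (u - uk k)) hr0 hcontract
  have hr1 : r < 1 := (sq_lt_one_iff₀ hr0).1 (hr2 ▸ hsmall)
  refine ⟨hbound, squeeze_zero (fun k => sqrt_nonneg _) hbound ?_⟩
  simpa using (tendsto_pow_atTop_nhds_zero_of_lt_one hr0 hr1).mul_const _

theorem cda_picard_global_convergence
    {V W : Type*} [NormedAddCommGroup V] [InnerProductSpace ℝ V]
    [NormedAddCommGroup W] [InnerProductSpace ℝ W]
    (G : V →ₗ[ℝ] W) (b : V →ₗ[ℝ] V →ₗ[ℝ] V →ₗ[ℝ] ℝ) (f : V →ₗ[ℝ] ℝ)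
    (M F ν : ℝ) (hM : 0 < M) (hF : 0 ≤ F) (hν : 0 < ν)
    (hbskew : ∀ u v : V, b u v v = 0)
    (hb1 : ∀ u w v : V, |b u w v| ≤ M * Real.sqrt ‖u‖ * Real.sqrt ‖G u‖ * ‖G w‖ * ‖G v‖)
    (hb2 : ∀ u w v : V, |b u w v| ≤ M * ‖G u‖ * ‖G w‖ * ‖G v‖)
    (hb3 : ∀ u w v : V, |b u w v| ≤ M * ‖G u‖ * ‖G w‖ * Real.sqrt ‖v‖ * Real.sqrt ‖G v‖)
    (hf : ∀ v : V, |f v| ≤ F * ‖G v‖)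
    (IH : V →ₗ[ℝ] V) (CI H μ : ℝ) (hCI : 0 < CI) (hH : 0 < H) (hμ : 0 < μ)
    (hIH : ∀ v : V, ‖v - IH v‖ ≤ CI * H * ‖G v‖)
    (u : V) (hu : ∀ v : V, ν * (inner ℝ (G u) (G v) : ℝ) + b u u v = f v)
    (hsmall : 2 * CI * H * (M * F / ν ^ 2) ^ 2 < 1)
    (hμ' : μ ≥ ν / (4 * CI ^ 2 * H ^ 2))
    (uk : ℕ → V)
    (hstep : ∀ k, ∀ v : V, ν * (inner ℝ (G (uk (k + 1))) (G v) : ℝ) + b (uk k) (uk (k + 1)) v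
      + μ * (inner ℝ (IH (uk (k + 1) - u)) (IH v) : ℝ) = f v)
    : (∀ k, Real.sqrt (‖G (u - uk k)‖ ^ 2 + ‖u - uk k‖ ^ 2 / (2 * CI ^ 2 * H ^ 2)) ≤
        (Real.sqrt (2 * CI * H) * (M * F / ν ^ 2)) ^ k * Real.sqrt (‖G (u - uk 0)‖ ^ 2 + ‖u - uk 0‖ ^ 2 / (2 * CI ^ 2 * H ^ 2))) ∧
      Filter.Tendsto (fun k => Real.sqrt (‖G (u - uk k)‖ ^ 2 + ‖u - uk k‖ ^ 2 / (2 * CI ^ 2 * H ^ 2))) Filter.atTop (nhds 0) :=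
  cda_picard_global_convergence_general G b f M F ν hM hF hν hbskew hb1 hf IH CI H μ hCI hH hIH u hu
    hsmall hμ' uk hstep
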